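/- arXiv:1805.12213 — 2 statements merged into one kernel-verified Lean document; each statement's English description precedes it below -/
import Mathlib

section
/- For all N ≥ 2, all k ∈ {1,…,N−1}, all p ∈ (1/2,1) and all y ∈ {1,…,N−1}, one has π_{N,k}(ξ(y) = 1) ≤ π_{N,k}(ξ(y+1) = 1) ≤ λ·π_{N,k}(ξ(y) = 1). -/
open Filter
open scoped Classical BigOperators Topology

namespace Wasep

/-- Particle configurations on a segment of length `N`
(site `x` of the paper, `x ∈ {1,…,N}`, is index `x-1 : Fin N`). -/
abbrev Conf (N : ℕ) := Fin N → Bool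

/-- Number of particles of a configuration. -/
def numParticles {N : ℕ} (ξ : Conf N) : ℕ :=
  (Finset.univ.filter fun x => ξ x = true).card

/-- The left site of the bond `y` (the paper's site `y`, for `y ∈ {1,…,N-1}`). -/
def siteA {N : ℕ} (y : Fin (N - 1)) : Fin N := ⟨y.1, by have := y.isLt; omega⟩

/-- The right site of the bond `y` (the paper's site `y+1`, for `y ∈ {1,…,N-1}`). -/
def siteB {N : ℕ} (y : Fin (N - 1)) : Fin N := ⟨y.1 + 1, by have := y.isLt; omega⟩

/-- Jump rate of the bond `y` in configuration `ξ`: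
`q·1_{ξ(y)<ξ(y+1)} + p·1_{ξ(y)>ξ(y+1)}` with `q = 1-p`. -/
noncomputable def rate {N : ℕ} (p : ℝ) (ξ : Conf N) (y : Fin (N - 1)) : ℝ :=
  (if ξ (siteA y) = false ∧ ξ (siteB y) = true then 1 - p else 0) +
    (if ξ (siteA y) = true ∧ ξ (siteB y) = false then p else 0)

/-- The configuration `ξ^y`, with the contents of sites `y` and `y+1` swapped. -/
def swapBond {N : ℕ} (ξ : Conf N) (y : Fin (N - 1)) : Conf N :=
  ξ ∘ Equiv.swap (siteA y) (siteB y)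

/-- The ASEP generator acting on functions:
`(L f)(ξ) = Σ_{y=1}^{N-1} (q·1_{ξ(y)<ξ(y+1)} + p·1_{ξ(y)>ξ(y+1)})(f(ξ^y) − f(ξ))`. -/
noncomputable def gen (N : ℕ) (p : ℝ) (f : Conf N → ℝ) (ξ : Conf N) : ℝ :=
  ∑ y : Fin (N - 1), rate p ξ y * (f (swapBond ξ y) - f ξ)

/-- The ASEP generator, as a matrix:  `(L f)(ξ) = Σ_{ξ'} genM(ξ,ξ') f(ξ')`. -/
noncomputable def genM (N : ℕ) (p : ℝ) : Matrix (Conf N) (Conf N) ℝ := fun ξ ξ' =>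
  ∑ y : Fin (N - 1),
    rate p ξ y * ((if ξ' = swapBond ξ y then (1 : ℝ) else 0) - (if ξ' = ξ then (1 : ℝ) else 0))

/-- The semigroup `P_t = exp (t L)`; `Pt N p t ξ ξ'` is the transition
probability from `ξ` to `ξ'` in time `t`. -/
noncomputable def Pt (N : ℕ) (p t : ℝ) (ξ ξ' : Conf N) : ℝ :=
  (NormedSpace.exp (t • LinearMap.toContinuousLinearMap (Matrix.toLin' (genM N p))))
    (fun η => if η = ξ' then (1 : ℝ) else 0) ξ

/-- `λ = p / q`. -/
noncomputable def lam (p : ℝ) : ℝ := p / (1 - p)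

/-- The bias `b = p - q`. -/
def bias (p : ℝ) : ℝ := p - (1 - p)

/-- The increasing list of (1-based) particle positions `ξ_1 < ξ_2 < … < ξ_k`. -/
def particlePos {N : ℕ} (ξ : Conf N) : List ℕ :=
  ((Finset.univ.filter fun x => ξ x = true).sort (· ≤ ·)).map fun x => (x : ℕ) + 1

/-- `A(ξ) = Σ_{i=1}^k (N − k + i − ξ_i)`. -/
def Astat (N k : ℕ) {M : ℕ} (ξ : Conf M) : ℤ :=
  ∑ i ∈ Finset.range k, ((N : ℤ) - k + (i + 1) - ((particlePos ξ).getD i 0 : ℤ))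

/-- The partition function `Z_{N,k} = Σ_{ξ ∈ Ω⁰_{N,k}} λ^{−A(ξ)}`. -/
noncomputable def Zpart (N k : ℕ) (p : ℝ) : ℝ :=
  ∑ ξ ∈ Finset.univ.filter (fun ξ : Conf N => numParticles ξ = k), lam p ^ (-Astat N k ξ)

/-- The invariant measure `π_{N,k}(ξ) = λ^{−A(ξ)}/Z_{N,k}`,
extended by `0` outside of the `k`-particle sector. -/
noncomputable def statMeas (N k : ℕ) (p : ℝ) (ξ : Conf N) : ℝ :=
  if numParticles ξ = k then lam p ^ (-Astat N k ξ) / Zpart N k p else 0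

/-- Total variation distance `‖μ − ν‖_TV = sup_A (μ(A) − ν(A))` on a finite space. -/
noncomputable def tvDist {S : Type*} [Fintype S] (μ ν : S → ℝ) : ℝ :=
  ⨆ A : Finset S, (∑ x ∈ A, μ x - ∑ x ∈ A, ν x)

/-- `d^{N,k}(t) = max_{ξ ∈ Ω⁰_{N,k}} ‖P_t(ξ,·) − π_{N,k}‖_TV`. -/
noncomputable def distEq (N k : ℕ) (p t : ℝ) : ℝ :=
  ⨆ ξ : {ξ : Conf N // numParticles ξ = k},
    tvDist (fun ξ' => Pt N p t ξ.1 ξ') (statMeas N k p)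

/-- `T^{N,k}_mix(ε) = inf {t ≥ 0 : d^{N,k}(t) ≤ ε}`. -/
noncomputable def Tmix (N k : ℕ) (p ε : ℝ) : ℝ :=
  sInf {t : ℝ | 0 ≤ t ∧ distEq N k p t ≤ ε}

/-- The height function `h(ξ)(x) = Σ_{y=1}^x (2ξ(y) − 1)`, for `x ∈ {0,…,N}`. -/
def height {N : ℕ} (ξ : Conf N) (x : ℕ) : ℤ :=
  ∑ y ∈ Finset.univ.filter (fun y : Fin N => (y : ℕ) < x), (if ξ y then (1 : ℤ) else -1)

/-- Pointwise order on height functions. -/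
def heightLE {N : ℕ} (ξ ξ' : Conf N) : Prop := ∀ x ≤ N, height ξ x ≤ height ξ' x

/-- `ϱ = (√p − √q)²`. -/
noncomputable def rho (p : ℝ) : ℝ := (Real.sqrt p - Real.sqrt (1 - p)) ^ 2

/-- The spectral gap `gap_N = (√p − √q)² + 4√(pq)·sin²(π/(2N))`. -/
noncomputable def gapN (N : ℕ) (p : ℝ) : ℝ :=
  rho p + 4 * Real.sqrt (p * (1 - p)) * Real.sin (Real.pi / (2 * N)) ^ 2

/-- `a` solves the boundary value problem `√(pq)·Δa(x) = ϱ·a(x)` on `{1,…,N−1}`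
with `a(0) = 1` and `a(N) = λ^{(2k−N)/2}`, defining `a_{N,k}`. -/
def IsBVP (N k : ℕ) (p : ℝ) (a : ℕ → ℝ) : Prop :=
  a 0 = 1 ∧ a N = lam p ^ ((2 * (k : ℝ) - N) / 2) ∧
    ∀ x : ℕ, 1 ≤ x → x ≤ N - 1 →
      Real.sqrt (p * (1 - p)) * (a (x + 1) + a (x - 1) - 2 * a x) = rho p * a x

/-- `f^{(j)}_{N,k}(ζ) = Σ_{x=1}^{N-1} sin(jπx/N)·(λ^{ζ(x)/2} − a_{N,k}(x))/(λ−1)`,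
viewed as a function of the particle configuration via the height function. -/
noncomputable def eigenF (N : ℕ) (p : ℝ) (a : ℕ → ℝ) (j : ℕ) (ξ : Conf N) : ℝ :=
  ∑ x ∈ Finset.Icc 1 (N - 1),
    Real.sin ((j : ℝ) * Real.pi * x / N) *
      ((lam p ^ ((height ξ x : ℝ) / 2) - a x) / (lam p - 1))

/-- `f^{(0)}_{N,k}(ζ) = Σ_{x=1}^{N-1} (λ^{ζ(x)/2} − a_{N,k}(x))/(λ−1)`. -/
noncomputable def fZero (N : ℕ) (p : ℝ) (a : ℕ → ℝ) (ξ : Conf N) : ℝ :=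
  ∑ x ∈ Finset.Icc 1 (N - 1), (lam p ^ ((height ξ x : ℝ) / 2) - a x) / (lam p - 1)

/-- The maximal configuration `ξ^max` (particles on sites `1,…,k`);
its height function is `∧`. -/
def confMax (N k : ℕ) : Conf N := fun x => decide ((x : ℕ) < k)

/-- The minimal configuration `ξ^min` (particles on sites `N−k+1,…,N`);
its height function is `∨`. -/
def confMin (N k : ℕ) : Conf N := fun x => decide (N - k ≤ (x : ℕ))

/-- `π_{N,k}(ξ(x) = 1)` for the (0-based) site `x : Fin N`. -/
noncomputable def occProb (N k : ℕ) (p : ℝ) (x : Fin N) : ℝ :=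
  ∑ ξ ∈ Finset.univ.filter (fun ξ : Conf N => ξ x = true), statMeas N k p ξ

/-- `ℓ_N(ξ) = min {x ∈ {1,…,N} : ξ(x) = 1}`, the position of the leftmost particle. -/
noncomputable def leftPos {N : ℕ} (ξ : Conf N) : ℕ :=
  sInf {x | ∃ y : Fin N, ξ y = true ∧ x = (y : ℕ) + 1}

/-- `r_N(ξ) = max {x ∈ {1,…,N} : ξ(x) = 0}`, the position of the rightmost empty site. -/
noncomputable def rightEmpty {N : ℕ} (ξ : Conf N) : ℕ :=
  sSup {x | ∃ y : Fin N, ξ y = false ∧ x = (y : ℕ) + 1}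

/-- `Q₁(ξ)`: maximal length of a run of consecutive empty sites. -/
noncomputable def runEmpty {N : ℕ} (ξ : Conf N) : ℕ :=
  sSup {n | 1 ≤ n ∧ ∃ i, i + n ≤ N ∧
    ∀ y : Fin N, i ≤ (y : ℕ) → (y : ℕ) < i + n → ξ y = false}

/-- `Q₂(ξ)`: maximal length of a run of consecutive occupied sites. -/
noncomputable def runFull {N : ℕ} (ξ : Conf N) : ℕ :=
  sSup {n | 1 ≤ n ∧ ∃ i, i + n ≤ N ∧
    ∀ y : Fin N, i ≤ (y : ℕ) → (y : ℕ) < i + n → ξ y = true}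

/-- `Q(ξ) = max(Q₁(ξ), Q₂(ξ))`. -/
noncomputable def Qmax {N : ℕ} (ξ : Conf N) : ℕ := max (runEmpty ξ) (runFull ξ)

/-- `L_N(ζ) = max{x : ζ(x) = −x}` for a height function `ζ`. -/
noncomputable def LNh {N : ℕ} (ξ : Conf N) : ℕ :=
  sSup {x | x ≤ N ∧ height ξ x = -(x : ℤ)}

/-- `R_N(ζ) = min{x : ζ(x) = x − 2(N−k)}` for a height function `ζ`. -/
noncomputable def RNh (k : ℕ) {N : ℕ} (ξ : Conf N) : ℕ :=
  sInf {x | x ≤ N ∧ height ξ x = (x : ℤ) - 2 * ((N : ℤ) - k)}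

/-- `D_N(ζ) = max(|L_N(ζ) − (N−k)|, |R_N(ζ) − (N−k)|)`. -/
noncomputable def DNh (k : ℕ) {N : ℕ} (ξ : Conf N) : ℤ :=
  max |(LNh ξ : ℤ) - ((N : ℤ) - k)| |(RNh k ξ : ℤ) - ((N : ℤ) - k)|

/-- `H_ζ(x) = λ^{(N−k)/2}·(λ^{ζ(x)/2} − a_{N,k}(x))/(λ−1)`. -/
noncomputable def Hfun (N k : ℕ) (p : ℝ) (a : ℕ → ℝ) (ξ : Conf N) (x : ℕ) : ℝ :=
  lam p ^ (((N : ℝ) - k) / 2) * ((lam p ^ ((height ξ x : ℝ) / 2) - a x) / (lam p - 1))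

/-- Variance of `f` under the (probability vector) `μ`. -/
noncomputable def varOf {S : Type*} [Fintype S] (μ f : S → ℝ) : ℝ :=
  (∑ x, μ x * f x ^ 2) - (∑ x, μ x * f x) ^ 2

/-- Total variation distance between the pushforwards of `μ` and `ν` by `g`. -/
noncomputable def tvPush {S : Type*} [Fintype S] (μ ν : S → ℝ) (g : S → ℕ) : ℝ :=
  ⨆ A : Set ℕ,
    ((∑ x ∈ Finset.univ.filter (fun x => g x ∈ A), μ x) -
      ∑ x ∈ Finset.univ.filter (fun x => g x ∈ A), ν x)

/-- The scaling limit `ℓ_α(t)` of the (rescaled) position of the leftmost particle. -/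
noncomputable def ellAlpha (α t : ℝ) : ℝ :=
  if t ≤ α then 0
  else if (Real.sqrt α + Real.sqrt (1 - α)) ^ 2 ≤ t then 1 - α
  else (Real.sqrt t - Real.sqrt α) ^ 2

/-- The scaling limit `r_α(t)` of the (rescaled) position of the rightmost empty site. -/
noncomputable def rAlpha (α t : ℝ) : ℝ :=
  if t ≤ 1 - α then 1
  else if (Real.sqrt α + Real.sqrt (1 - α)) ^ 2 ≤ t then 1 - α
  else 1 - (Real.sqrt t - Real.sqrt (1 - α)) ^ 2

end Wasep

/-!
Swapping the contents of sites `y` and `y+1` maps the configurations with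
`(ξ(y), ξ(y+1)) = (1, 0)` bijectively onto those with `(0, 1)`; it moves one particle one step
to the right, so it lowers `A` by one and multiplies `π_{N,k}` by `λ`. Hence, writing
`a = π(ξ(y) = ξ(y+1) = 1)` and `c = π(ξ(y) = 1, ξ(y+1) = 0)`, we get `π(ξ(y) = 1) = a + c` and
`π(ξ(y+1) = 1) = a + λc`, and both inequalities follow from `λ ≥ 1`.
-/

open Finset

theorem List.sum_range_getD_map {α M : Type*} [AddCommMonoid M] (l : List α) (d : α)
    (f : α → M) : ∑ i ∈ Finset.range l.length, f (l.getD i d) = (l.map f).sum := by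
  rw [Finset.sum_range, ← Fin.sum_univ_fun_getElem]
  simp

theorem Finset.sum_comp_swap_of_mem_of_notMem {α M : Type*} [DecidableEq α] [AddCommGroup M]
    {s : Finset α} {a b : α} (ha : a ∈ s) (hb : b ∉ s) (f : α → M) :
    ∑ x ∈ s, f (Equiv.swap a b x) = ∑ x ∈ s, f x + (f b - f a) := by
  have hfix : ∀ x ∈ s.erase a, f (Equiv.swap a b x) = f x := fun x hx =>
    congrArg f (Equiv.swap_apply_of_ne_of_ne (ne_of_mem_erase hx)
      (ne_of_mem_of_not_mem (mem_of_mem_erase hx) hb))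
  rw [← add_sum_erase s _ ha, ← add_sum_erase s f ha, sum_congr rfl hfix,
    Equiv.swap_apply_left]
  abel

namespace Wasep

theorem sum_filter_comp_perm {N : ℕ} {M : Type*} [AddCommMonoid M] (ξ : Conf N)
    (σ : Equiv.Perm (Fin N)) (f : Fin N → M) :
    ∑ x ∈ univ.filter (fun x => (ξ ∘ σ) x = true), f x =
      ∑ x ∈ univ.filter (fun x => ξ x = true), f (σ.symm x) := by
  rw [sum_filter, sum_filter, ← Equiv.sum_comp σ fun x => if ξ x = true then f (σ.symm x) else 0]
  simp

theorem numParticles_comp_perm {N : ℕ} (ξ : Conf N) (σ : Equiv.Perm (Fin N)) :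
    numParticles (ξ ∘ σ) = numParticles ξ := by
  simp only [numParticles, card_eq_sum_ones]
  exact sum_filter_comp_perm ξ σ 1

theorem particlePos_perm {N : ℕ} (ξ : Conf N) :
    (particlePos ξ).Perm
      ((univ.filter fun x => ξ x = true).toList.map fun x : Fin N => (x : ℕ) + 1) := by
  have h : particlePos ξ =
      (((univ.filter fun x => ξ x = true).sort (· ≤ ·)).map fun x : Fin N => (x : ℕ)).map
        (· + 1) :=
    congrArg _ (List.flatMap_pure_eq_map _ _)
  rw [h, List.map_map]
  exact (sort_perm_toList _ (· ≤ ·)).map _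

theorem Astat_eq_sub_sum (N k : ℕ) {M : ℕ} (ξ : Conf M) (h : numParticles ξ = k) :
    Astat N k ξ = ∑ i ∈ range k, ((N : ℤ) - k + (i + 1)) -
      ∑ x ∈ univ.filter (fun x => ξ x = true), ((x : ℤ) + 1) := by
  have hlen : (particlePos ξ).length = k := by
    rw [(particlePos_perm ξ).length_eq, List.length_map, length_toList, ← h, numParticles]
  rw [Astat, sum_sub_distrib, ← hlen, List.sum_range_getD_map _ _ (Nat.cast : ℕ → ℤ),
    ((particlePos_perm ξ).map _).sum_eq, List.map_map, sum_map_toList]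
  simp

theorem Astat_comp_swap (N k : ℕ) {M : ℕ} {ξ : Conf M} {a b : Fin M}
    (h : numParticles ξ = k) (ha : ξ a = true) (hb : ξ b = false) :
    Astat N k (ξ ∘ Equiv.swap a b) = Astat N k ξ - ((b : ℤ) - a) := by
  rw [Astat_eq_sub_sum N k _ ((numParticles_comp_perm ξ _).trans h), Astat_eq_sub_sum N k ξ h,
    sum_filter_comp_perm, Equiv.symm_swap,
    sum_comp_swap_of_mem_of_notMem (by simp [ha]) (by simp [hb]) (fun x : Fin M => (x : ℤ) + 1)]
  ring

theorem statMeas_comp_swap (N k : ℕ) {p : ℝ} (hl : lam p ≠ 0) {ξ : Conf N} {a b : Fin N}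
    (ha : ξ a = true) (hb : ξ b = false) :
    statMeas N k p (ξ ∘ Equiv.swap a b) = lam p ^ ((b : ℤ) - a) * statMeas N k p ξ := by
  rw [statMeas, statMeas, numParticles_comp_perm]
  split_ifs with h
  · rw [Astat_comp_swap N k h ha hb, neg_sub', sub_neg_eq_add, zpow_add₀ hl]
    ring
  · rw [mul_zero]

theorem statMeas_nonneg (N k : ℕ) {p : ℝ} (hl : 0 ≤ lam p) (ξ : Conf N) :
    0 ≤ statMeas N k p ξ := by
  unfold statMeas Zpart
  split_ifs
  · exact div_nonneg (zpow_nonneg hl _) (sum_nonneg fun _ _ => zpow_nonneg hl _)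
  · exact le_rfl

noncomputable def pairProb (N k : ℕ) (p : ℝ) (a b : Fin N) (u v : Bool) : ℝ :=
  ∑ ξ ∈ univ.filter (fun ξ : Conf N => ξ a = u ∧ ξ b = v), statMeas N k p ξ

theorem pairProb_comm (N k : ℕ) (p : ℝ) (a b : Fin N) (u v : Bool) :
    pairProb N k p a b u v = pairProb N k p b a v u := by
  simp only [pairProb, and_comm]

theorem pairProb_nonneg (N k : ℕ) {p : ℝ} (hl : 0 ≤ lam p) (a b : Fin N) (u v : Bool) :
    0 ≤ pairProb N k p a b u v :=
  sum_nonneg fun ξ _ => statMeas_nonneg N k hl ξ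

theorem occProb_eq_pairProb_add (N k : ℕ) (p : ℝ) (a b : Fin N) :
    occProb N k p a = pairProb N k p a b true true + pairProb N k p a b true false := by
  rw [occProb, ← sum_filter_add_sum_filter_not _ (fun ξ : Conf N => ξ b = true),
    filter_filter, filter_filter]
  simp only [Bool.not_eq_true, pairProb]

theorem pairProb_false_true (N k : ℕ) {p : ℝ} (hl : lam p ≠ 0) (a b : Fin N) :
    pairProb N k p a b false true = lam p ^ ((b : ℤ) - a) * pairProb N k p a b true false := by
  rw [pairProb, pairProb, mul_sum]
  have hinv : ∀ ξ : Conf N, ξ ∘ Equiv.swap a b ∘ Equiv.swap a b = ξ := fun ξ => by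
    ext x
    simp
  refine (sum_nbij' (· ∘ Equiv.swap a b) (· ∘ Equiv.swap a b) (by simp_all) (by simp_all)
    (fun ξ _ => hinv ξ) (fun ξ _ => hinv ξ) fun ξ hξ => ?_).symm
  rw [mem_filter] at hξ
  exact (statMeas_comp_swap N k hl hξ.2.1 hξ.2.2).symm

theorem one_le_lam {p : ℝ} (h₁ : 1 / 2 ≤ p) (h₂ : p < 1) : 1 ≤ lam p := by
  rw [lam, le_div_iff₀ (by linarith)]
  linarith

theorem occupation_probability_monotone_general
    (N k : ℕ) (p : ℝ)
    (hp : p ∈ Set.Ioo (1 / 2 : ℝ) 1) (y : Fin N) (hy : (y : ℕ) + 1 < N) :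
    occProb N k p y ≤ occProb N k p ⟨(y : ℕ) + 1, hy⟩ ∧
      occProb N k p ⟨(y : ℕ) + 1, hy⟩ ≤ lam p * occProb N k p y := by
  set z : Fin N := ⟨(y : ℕ) + 1, hy⟩
  have hlam : 1 ≤ lam p := one_le_lam hp.1.le hp.2
  have hlam₀ : 0 < lam p := zero_lt_one.trans_le hlam
  have hjump : pairProb N k p y z false true = lam p * pairProb N k p y z true false := by
    rw [pairProb_false_true N k hlam₀.ne' y z, show (z : ℤ) - y = 1 by simp [z], zpow_one]
  have h₁ := pairProb_nonneg N k hlam₀.le y z true true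
  have h₂ := pairProb_nonneg N k hlam₀.le y z true false
  rw [occProb_eq_pairProb_add N k p y z, occProb_eq_pairProb_add N k p z y,
    pairProb_comm N k p z y, pairProb_comm N k p z y true false, hjump]
  constructor <;> nlinarith

/-- Monotonicity of the equilibrium occupation probabilities:
`π_{N,k}(ξ(y) = 1) ≤ π_{N,k}(ξ(y+1) = 1) ≤ λ·π_{N,k}(ξ(y) = 1)` (here `y : Fin N`
with `y+1 < N` is the 0-based index of the paper's site `y ∈ {1,…,N−1}`). -/
theorem occupation_probability_monotone
    (N k : ℕ) (p : ℝ) (hN : 2 ≤ N) (hk : 1 ≤ k ∧ k < N)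
    (hp : p ∈ Set.Ioo (1 / 2 : ℝ) 1) (y : Fin N) (hy : (y : ℕ) + 1 < N) :
    occProb N k p y ≤ occProb N k p ⟨(y : ℕ) + 1, hy⟩ ∧
      occProb N k p ⟨(y : ℕ) + 1, hy⟩ ≤ lam p * occProb N k p y :=
  occupation_probability_monotone_general N k p hp y hy

end Wasep
end

section
/- For all N ≥ 2, all k ∈ {1,…,N−1}, all p ∈ (1/2,1) and every j ∈ {1,…,N−1}, the function f^{(j)}_{N,k} (viewed as a function on Ω⁰_{N,k} via the height-function identification) is an eigenfunction of the ASEP generator: L_{N,k} f^{(j)}_{N,k} = −γ_j · f^{(j)}_{N,k}, where γ_j = ϱ + 4√(pq)·sin²(jπ/(2N)). -/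
open Filter
open scoped Classical BigOperators Topology

namespace Wasep

/-!
Under Gärtner's microscopic Hopf–Cole transform `u(x) = λ^{h(x)/2}` the ASEP acts as a discrete
heat equation with killing. Swapping the bond `y` changes the height function only at `y + 1`,
and a four-case check, based on `√(pq)·√λ = p` and `√(pq)/√λ = q`, shows that the rate times
the resulting jump of `u(y + 1)` is `√(pq)·Δu(y + 1) − ϱ·u(y + 1)`. Subtracting `a_{N,k}`, which
solves the same equation with the boundary values `u(0) = 1` and `u(N) = λ^{(2k−N)/2}`, leaves
`v = u − a` with Dirichlet boundary conditions; summation by parts then moves `Δ` onto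
`sin(jπx/N)`, a Dirichlet eigenvector of `Δ` with eigenvalue `−4 sin²(jπ/(2N))`.
-/

open Finset

def discreteLaplacian (g : ℕ → ℝ) (x : ℕ) : ℝ := g (x + 1) + g (x - 1) - 2 * g x

theorem sum_mul_discreteLaplacian_comm (f g : ℕ → ℝ) (n : ℕ) (hf₀ : f 0 = 0) (hg₀ : g 0 = 0)
    (hfn : f (n + 1) = 0) (hgn : g (n + 1) = 0) :
    ∑ i ∈ range n, f (i + 1) * discreteLaplacian g (i + 1) =
      ∑ i ∈ range n, g (i + 1) * discreteLaplacian f (i + 1) := by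
  rw [← sub_eq_zero, ← sum_sub_distrib]
  have hflux : ∀ i ∈ range n,
      f (i + 1) * discreteLaplacian g (i + 1) - g (i + 1) * discreteLaplacian f (i + 1) =
      (f (i + 1) * g (i + 2) - f (i + 2) * g (i + 1)) - (f i * g (i + 1) - f (i + 1) * g i) := by
    intro i _
    simp only [discreteLaplacian, Nat.add_sub_cancel]
    ring
  rw [sum_congr rfl hflux,
    sum_range_sub (fun i => f i * g (i + 1) - f (i + 1) * g i), hf₀, hg₀, hfn, hgn]
  ring

theorem discreteLaplacian_sin_mul (θ : ℝ) (x : ℕ) (hx : 1 ≤ x) :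
    discreteLaplacian (fun x : ℕ => Real.sin (θ * x)) x =
      -(4 * Real.sin (θ / 2) ^ 2) * Real.sin (θ * x) := by
  obtain ⟨i, rfl⟩ := Nat.exists_eq_add_of_le' hx
  have hcos : Real.cos θ = 1 - 2 * Real.sin (θ / 2) ^ 2 := by
    rw [← Real.cos_two_mul_eq_one_sub, mul_div_cancel₀ θ two_ne_zero]
  simp only [discreteLaplacian, Nat.add_sub_cancel]
  push_cast
  rw [show θ * (i + 1 + 1) = θ * (i + 1) + θ by ring, show θ * i = θ * (i + 1) - θ by ring,
    Real.sin_add, Real.sin_sub, hcos]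
  ring

theorem sum_sin_mul_discreteLaplacian (θ : ℝ) (n : ℕ) (hθ : Real.sin (θ * (n + 1)) = 0)
    (v : ℕ → ℝ) (hv₀ : v 0 = 0) (hvn : v (n + 1) = 0) :
    ∑ i ∈ range n, Real.sin (θ * (i + 1 : ℕ)) * discreteLaplacian v (i + 1) =
      -(4 * Real.sin (θ / 2) ^ 2) * ∑ i ∈ range n, Real.sin (θ * (i + 1 : ℕ)) * v (i + 1) := by
  rw [sum_mul_discreteLaplacian_comm (fun x : ℕ => Real.sin (θ * x)) v n (by simp) hv₀
    (by exact_mod_cast hθ) hvn, mul_sum]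
  refine sum_congr rfl fun i _ => ?_
  rw [discreteLaplacian_sin_mul θ (i + 1) (by omega)]
  ring

def spin (b : Bool) : ℤ := if b then 1 else -1

section Height

variable {N : ℕ}

theorem height_eq_sum (ξ : Conf N) (x : ℕ) :
    height ξ x = ∑ z : Fin N, if (z : ℕ) < x then spin (ξ z) else 0 := by
  rw [height, sum_filter]
  rfl

@[simp]
theorem height_zero (ξ : Conf N) : height ξ 0 = 0 := by
  simp [height_eq_sum]

theorem height_succ (ξ : Conf N) (x : ℕ) (hx : x < N) :
    height ξ (x + 1) = height ξ x + spin (ξ ⟨x, hx⟩) := by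
  rw [height_eq_sum, height_eq_sum,
    ← sum_ite_eq_of_mem' univ (⟨x, hx⟩ : Fin N) (fun z => spin (ξ z)) (mem_univ _),
    ← sum_add_distrib]
  refine sum_congr rfl fun z _ => ?_
  rcases lt_trichotomy (z : ℕ) x with h | h | h
  · simp [h, Nat.lt_succ_of_lt h, Fin.ext_iff, h.ne]
  · simp [h, Fin.ext_iff]
  · simp [h.not_gt, (Nat.succ_le_of_lt h).not_gt, Fin.ext_iff, h.ne']

theorem height_self (ξ : Conf N) : height ξ N = 2 * (numParticles ξ : ℤ) - N := by
  have hspin : ∀ b : Bool, spin b = 2 * (if b = true then 1 else 0) - 1 := by decide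
  simp only [height_eq_sum, Fin.is_lt, if_true, hspin, sum_sub_distrib, ← mul_sum, sum_boole,
    numParticles, sum_const, card_univ, Fintype.card_fin, nsmul_eq_mul, mul_one]

theorem height_swapBond_of_ne (ξ : Conf N) (y : Fin (N - 1)) {x : ℕ} (hx : x ≠ y + 1) :
    height (swapBond ξ y) x = height ξ x := by
  set σ := Equiv.swap (siteA y) (siteB y)
  have hσ : ∀ z : Fin N, (σ z : ℕ) < x ↔ (z : ℕ) < x := by
    intro z
    rcases eq_or_ne z (siteA y) with rfl | hA
    · simp only [siteA, siteB, Equiv.swap_apply_left, σ]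
      omega
    rcases eq_or_ne z (siteB y) with rfl | hB
    · simp only [siteA, siteB, Equiv.swap_apply_right, σ]
      omega
    rw [Equiv.swap_apply_of_ne_of_ne hA hB]
  rw [height_eq_sum, height_eq_sum, ← Equiv.sum_comp σ]
  simp only [swapBond, Function.comp_apply, hσ, Equiv.swap_apply_self, σ]

theorem height_swapBond_succ (ξ : Conf N) (y : Fin (N - 1)) :
    height (swapBond ξ y) (y + 1) = height ξ y + spin (ξ (siteB y)) := by
  rw [height_succ _ y (by omega), height_swapBond_of_ne ξ y (by omega)]
  simp [swapBond, siteA]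

end Height

theorem rpow_intCast_div_two {x : ℝ} (hx : 0 ≤ x) (z : ℤ) : x ^ ((z : ℝ) / 2) = √x ^ z := by
  rw [Real.sqrt_eq_rpow, ← Real.rpow_intCast, ← Real.rpow_mul hx]
  ring_nf

section Rates

variable {p : ℝ}

theorem lam_pos (hp₀ : 0 < p) (hp₁ : p < 1) : 0 < lam p := div_pos hp₀ (by linarith)

theorem one_sub_mul_sqrt_lam_sq (hp₀ : 0 < p) (hp₁ : p < 1) : (1 - p) * √(lam p) ^ 2 = p := by
  rw [Real.sq_sqrt (lam_pos hp₀ hp₁).le, lam]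
  field_simp [(by linarith : 1 - p ≠ 0)]

theorem sqrt_mul_one_sub_eq (hp₀ : 0 < p) (hp₁ : p < 1) :
    √(p * (1 - p)) = (1 - p) * √(lam p) := by
  have hq : 0 < 1 - p := by linarith
  rw [lam, show p * (1 - p) = (1 - p) ^ 2 * (p / (1 - p)) by field_simp,
    Real.sqrt_mul (sq_nonneg _), Real.sqrt_sq hq.le]

theorem rho_eq (hp₀ : 0 ≤ p) (hp₁ : p ≤ 1) : rho p = 1 - 2 * √(p * (1 - p)) := by
  rw [rho, Real.sqrt_mul hp₀, sub_sq, Real.sq_sqrt hp₀, Real.sq_sqrt (by linarith)]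
  ring

theorem rate_mul_zpow_sub_one (hp₀ : 0 < p) (hp₁ : p < 1) {N : ℕ} (ξ : Conf N)
    (y : Fin (N - 1)) :
    rate p ξ y * (√(lam p) ^ (spin (ξ (siteB y)) - spin (ξ (siteA y))) - 1) =
      √(p * (1 - p)) * (√(lam p) ^ spin (ξ (siteB y)) + √(lam p) ^ (-spin (ξ (siteA y))) - 2)
        - rho p := by
  have hr : √(lam p) ≠ 0 := (Real.sqrt_pos.2 (lam_pos hp₀ hp₁)).ne'
  have hlam := one_sub_mul_sqrt_lam_sq hp₀ hp₁
  rw [rho_eq hp₀.le hp₁.le, sqrt_mul_one_sub_eq hp₀ hp₁, rate]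
  cases ξ (siteA y) <;> cases ξ (siteB y) <;>
    simp only [spin, Bool.false_eq_true, Bool.true_eq_false, and_false, and_true, and_self,
      ↓reduceIte, add_zero, zero_add, Int.reduceNeg, Int.reduceAdd, Int.reduceSub, sub_self,
      sub_neg_eq_add, neg_neg, zpow_neg, zpow_ofNat, pow_zero, pow_one, mul_zero] <;>
    field_simp <;> linear_combination -hlam

end Rates

section Eigenfunction

variable {N : ℕ} {p : ℝ}

noncomputable def expHeight (p : ℝ) (ξ : Conf N) (x : ℕ) : ℝ := √(lam p) ^ height ξ x

theorem eigenF_eq_sum (hlam : 0 ≤ lam p) (a : ℕ → ℝ) (j : ℕ) (ξ : Conf N) :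
    eigenF N p a j ξ = ∑ i ∈ range (N - 1), Real.sin (j * Real.pi / N * (i + 1 : ℕ)) *
      ((expHeight p ξ (i + 1) - a (i + 1)) / (lam p - 1)) := by
  rw [eigenF, ← Ico_add_one_right_eq_Icc, sum_Ico_eq_sum_range, Nat.add_sub_cancel]
  refine sum_congr rfl fun i _ => ?_
  rw [add_comm 1 i, expHeight, ← rpow_intCast_div_two hlam]
  congr 2
  ring

theorem eigenF_swapBond_sub (hlam : 0 ≤ lam p) (a : ℕ → ℝ) (j : ℕ) (ξ : Conf N)
    (y : Fin (N - 1)) :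
    eigenF N p a j (swapBond ξ y) - eigenF N p a j ξ =
      Real.sin (j * Real.pi / N * (y + 1 : ℕ)) *
        ((expHeight p (swapBond ξ y) (y + 1) - expHeight p ξ (y + 1)) / (lam p - 1)) := by
  rw [eigenF_eq_sum hlam, eigenF_eq_sum hlam, ← sum_sub_distrib,
    sum_eq_single_of_mem (y : ℕ) (mem_range.2 y.isLt)]
  · ring
  · intro i _ hi
    simp only [expHeight, height_swapBond_of_ne ξ y (show i + 1 ≠ y + 1 by omega), sub_self]

theorem rate_mul_eigenF_swapBond_sub (hp₀ : 0 < p) (hp₁ : p < 1) (a : ℕ → ℝ) (j : ℕ)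
    (ξ : Conf N) (y : Fin (N - 1)) :
    rate p ξ y * (eigenF N p a j (swapBond ξ y) - eigenF N p a j ξ) =
      Real.sin (j * Real.pi / N * (y + 1 : ℕ)) *
        ((√(p * (1 - p)) * discreteLaplacian (expHeight p ξ) (y + 1) -
          rho p * expHeight p ξ (y + 1)) / (lam p - 1)) := by
  have hr : √(lam p) ≠ 0 := (Real.sqrt_pos.2 (lam_pos hp₀ hp₁)).ne'
  have hA : height ξ (y + 1) = height ξ y + spin (ξ (siteA y)) := height_succ ξ y (by omega)
  have hB : height ξ (y + 1 + 1) = height ξ (y + 1) + spin (ξ (siteB y)) :=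
    height_succ ξ (y + 1) (by omega)
  have hswap := height_swapBond_succ ξ y
  have key := rate_mul_zpow_sub_one hp₀ hp₁ ξ y
  rw [eigenF_swapBond_sub (lam_pos hp₀ hp₁).le]
  simp only [discreteLaplacian, expHeight, Nat.add_sub_cancel, hswap, hB]
  rw [show height ξ y = height ξ (y + 1) - spin (ξ (siteA y)) by omega]
  simp only [zpow_add₀ hr, zpow_sub₀ hr]
  rw [zpow_sub₀ hr, zpow_neg] at key
  linear_combination
    Real.sin (j * Real.pi / N * (y + 1 : ℕ)) * √(lam p) ^ height ξ (y + 1) / (lam p - 1) * key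

theorem gen_eigenF_eq_sum (hp₀ : 0 < p) (hp₁ : p < 1) {a : ℕ → ℝ}
    (ha : ∀ x, 1 ≤ x → x ≤ N - 1 → √(p * (1 - p)) * discreteLaplacian a x = rho p * a x) (j : ℕ)
    (ξ : Conf N) :
    gen N p (eigenF N p a j) ξ = ∑ i ∈ range (N - 1), Real.sin (j * Real.pi / N * (i + 1 : ℕ)) *
      ((√(p * (1 - p)) * discreteLaplacian (fun x => expHeight p ξ x - a x) (i + 1) -
        rho p * (expHeight p ξ (i + 1) - a (i + 1))) / (lam p - 1)) := by
  rw [gen, ← Fin.sum_univ_eq_sum_range]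
  refine sum_congr rfl fun y _ => ?_
  have hay := ha (y + 1) (by omega) (by omega)
  rw [rate_mul_eigenF_swapBond_sub hp₀ hp₁]
  simp only [discreteLaplacian] at hay ⊢
  linear_combination Real.sin (j * Real.pi / N * (y + 1 : ℕ)) / (lam p - 1) * hay

end Eigenfunction

theorem eigenfunction_equation_general
    (N k : ℕ) (p : ℝ) (hN : 2 ≤ N)
    (hp : p ∈ Set.Ioo (1 / 2 : ℝ) 1)
    (a : ℕ → ℝ) (ha : IsBVP N k p a)
    (j : ℕ)
    (ξ : Conf N) (hξ : numParticles ξ = k) :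
    gen N p (eigenF N p a j) ξ =
      -(rho p + 4 * Real.sqrt (p * (1 - p)) * Real.sin ((j : ℝ) * Real.pi / (2 * N)) ^ 2) *
        eigenF N p a j ξ := by
  have hp₀ : 0 < p := by linarith [hp.1]
  have hlam := (lam_pos hp₀ hp.2).le
  set θ := j * Real.pi / N
  set v := fun x => expHeight p ξ x - a x
  have hv₀ : v 0 = 0 := by simp [v, expHeight, ha.1]
  have hvN : v (N - 1 + 1) = 0 := by
    rw [Nat.sub_add_cancel (by omega)]
    simp only [v, expHeight, height_self, hξ, ha.2.1, ← rpow_intCast_div_two hlam]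
    push_cast
    ring_nf
  have hθ : Real.sin (θ * ((N - 1 : ℕ) + 1)) = 0 := by
    rw [Nat.cast_sub (by omega), Nat.cast_one, sub_add_cancel, div_mul_cancel₀ _ (by positivity)]
    exact Real.sin_nat_mul_pi j
  have hsum := sum_sin_mul_discreteLaplacian θ (N - 1) hθ v hv₀ hvN
  rw [gen_eigenF_eq_sum hp₀ hp.2 ha.2.2, eigenF_eq_sum hlam]
  calc _ = (√(p * (1 - p)) *
          ∑ i ∈ range (N - 1), Real.sin (θ * (i + 1 : ℕ)) * discreteLaplacian v (i + 1)
        - rho p * ∑ i ∈ range (N - 1), Real.sin (θ * (i + 1 : ℕ)) * v (i + 1)) / (lam p - 1) := by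
        rw [mul_sum, mul_sum, ← sum_sub_distrib, sum_div]
        exact sum_congr rfl fun i _ => by ring
    _ = _ := by
      simp only [← mul_div_assoc, ← sum_div, hsum, show j * Real.pi / (2 * N) = θ / 2 by ring]
      ring

/-- The functions `f^{(j)}_{N,k}`, `j ∈ {1,…,N−1}`, are eigenfunctions of the ASEP
generator: `L_{N,k} f^{(j)}_{N,k} = −γ_j·f^{(j)}_{N,k}` with
`γ_j = ϱ + 4√(pq)·sin²(jπ/(2N))`. -/
theorem eigenfunction_equation
    (N k : ℕ) (p : ℝ) (hN : 2 ≤ N) (hk : 1 ≤ k ∧ k < N)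
    (hp : p ∈ Set.Ioo (1 / 2 : ℝ) 1)
    (a : ℕ → ℝ) (ha : IsBVP N k p a)
    (j : ℕ) (hj : 1 ≤ j ∧ j ≤ N - 1)
    (ξ : Conf N) (hξ : numParticles ξ = k) :
    gen N p (eigenF N p a j) ξ =
      -(rho p + 4 * Real.sqrt (p * (1 - p)) * Real.sin ((j : ℝ) * Real.pi / (2 * N)) ^ 2) *
        eigenF N p a j ξ :=
  eigenfunction_equation_general N k p hN hp a ha j ξ hξ

end Wasep
end
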